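/- Let (Ω, μ) be a probability space, let m and N be positive integers, and let β > 0. For each α ∈ Ω let P_α = (p₁(α), …, p_m(α)) be a probability vector on {1,…,m}, with each p_k : Ω → ℝ measurable, and let P_fixed = (μ₁, …, μ_m) be a fixed probability vector. Suppose that for every k and every δ > 0 one has μ({α : |p_k(α) − μ_k| ≥ δ}) ≤ β/δ². Then with probability at least 1 − m·√β over the draw of α from μ, the following holds: for every post-processing map Φ : {1,…,m}^N → ℝ^M (with M arbitrary) and every decision rule g : ℝ^M → Bool, the success probability of distinguishing Φ applied to N i.i.d. samples from P_α from Φ applied to N i.i.d. samples from P_fixed (each alternative with prior probability 1/2), namely (1/2)·P_α^⊗N({s : g(Φ(s)) = false}) + (1/2)·P_fixed^⊗N({s : g(Φ(s)) = true}), is at most 1/2 + (N·m·β^{1/4})/4. -/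
import Mathlib


open MeasureTheory Finset

lemma aux_sum_prod {m N : ℕ} (c : Fin m → ℝ) (hc : ∑ k, c k = 1) :
    ∑ s : Fin N → Fin m, ∏ j, c (s j) = 1 := by
  rw [← Fintype.piFinset_univ, ← Finset.prod_univ_sum]
  simp [hc]

lemma aux_l1 {m : ℕ} (p c : Fin m → ℝ) (hp : ∀ k, 0 ≤ p k) (hc : ∀ k, 0 ≤ c k)
    (hps : ∑ k, p k = 1) (hcs : ∑ k, c k = 1) (N : ℕ) :
    ∑ s : Fin N → Fin m, |(∏ j, p (s j)) - ∏ j, c (s j)| ≤ N * ∑ k, |p k - c k| := by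
  induction N with
  | zero => simp
  | succ n ih =>
    have habs : 0 ≤ ∑ k, |p k - c k| := Finset.sum_nonneg fun k _ => abs_nonneg _
    have step1 : ∑ s : Fin (n+1) → Fin m, |(∏ j, p (s j)) - ∏ j, c (s j)|
        = ∑ x : Fin m × (Fin n → Fin m),
            |(∏ j : Fin (n+1), p (Fin.cons (α := fun _ => Fin m) x.1 x.2 j)) - ∏ j : Fin (n+1), c (Fin.cons (α := fun _ => Fin m) x.1 x.2 j)| :=
      (Fintype.sum_equiv (Fin.consEquiv (fun _ : Fin (n+1) => Fin m))
        (fun x : Fin m × (Fin n → Fin m) =>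
          |(∏ j : Fin (n+1), p (Fin.cons (α := fun _ => Fin m) x.1 x.2 j)) - ∏ j : Fin (n+1), c (Fin.cons (α := fun _ => Fin m) x.1 x.2 j)|)
        (fun s : Fin (n+1) → Fin m => |(∏ j, p (s j)) - ∏ j, c (s j)|)
        (fun x => by simp [Fin.consEquiv])).symm
    have step2 : ∑ x : Fin m × (Fin n → Fin m),
          |(∏ j : Fin (n+1), p (Fin.cons (α := fun _ => Fin m) x.1 x.2 j))
            - ∏ j : Fin (n+1), c (Fin.cons (α := fun _ => Fin m) x.1 x.2 j)|
        = ∑ a : Fin m, ∑ t : Fin n → Fin m,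
            |p a * ∏ j, p (t j) - c a * ∏ j, c (t j)| := by
      rw [Fintype.sum_prod_type]
      simp [Fin.prod_univ_succ]
    rw [step1, step2]
    calc ∑ a : Fin m, ∑ t : Fin n → Fin m, |p a * ∏ j, p (t j) - c a * ∏ j, c (t j)|
        ≤ ∑ a : Fin m, ∑ t : Fin n → Fin m,
            (p a * |(∏ j, p (t j)) - ∏ j, c (t j)| + |p a - c a| * ∏ j, c (t j)) := by
          refine Finset.sum_le_sum fun a _ => Finset.sum_le_sum fun t _ => ?_
          have h1 : p a * ∏ j, p (t j) - c a * ∏ j, c (t j)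
              = p a * ((∏ j, p (t j)) - ∏ j, c (t j)) + (p a - c a) * ∏ j, c (t j) := by
            ring
          rw [h1]
          refine (abs_add_le _ _).trans ?_
          rw [abs_mul, abs_mul, abs_of_nonneg (hp a),
            abs_of_nonneg (Finset.prod_nonneg fun j _ => hc _)]
      _ = (∑ t : Fin n → Fin m, |(∏ j, p (t j)) - ∏ j, c (t j)|) + ∑ k, |p k - c k| := by
          simp only [Finset.sum_add_distrib, ← Finset.mul_sum]
          rw [← Finset.sum_mul, ← Finset.sum_mul, hps, aux_sum_prod c hcs]
          ring
      _ ≤ n * (∑ k, |p k - c k|) + ∑ k, |p k - c k| := by linarith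
      _ = ((n + 1 : ℕ) : ℝ) * ∑ k, |p k - c k| := by push_cast; ring

lemma aux_pos {ι : Type*} [Fintype ι] (D : ι → ℝ) (h : ∑ i, D i = 0) (A : Finset ι) :
    ∑ i ∈ A, D i ≤ (∑ i, |D i|) / 2 := by
  have h1 : ∑ i ∈ A, D i ≤ ∑ i ∈ A, (|D i| + D i) / 2 :=
    Finset.sum_le_sum fun i _ => by
      have := le_abs_self (D i); linarith
  have h2 : ∑ i ∈ A, (|D i| + D i) / 2 ≤ ∑ i, (|D i| + D i) / 2 :=
    Finset.sum_le_sum_of_subset_of_nonneg (Finset.subset_univ A) fun i _ _ => by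
      have := neg_abs_le (D i); linarith
  have h3 : ∑ i, (|D i| + D i) / 2 = (∑ i, |D i|) / 2 := by
    rw [← Finset.sum_div, Finset.sum_add_distrib, h, add_zero]
  linarith

/-- (Formal version of Corollary: no post-processing overcomes
exponential concentration.) Under outcome probability concentration with constant `β`,
with probability at least `1 − m·√β` over the draw of `α`, for every post-processing map
`Φ : {1,…,m}^N → ℝ^M` and every decision rule `g : ℝ^M → Bool`, the success probability
of distinguishing the post-processed samples is at most `1/2 + N·m·β^{1/4}/4`. -/
theorem no_post_processing
    {Ω : Type*} [MeasurableSpace Ω] (μ : Measure Ω) [IsProbabilityMeasure μ]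
    {m N : ℕ} (hm : 0 < m) (hN : 0 < N) (β : ℝ) (hβ : 0 < β)
    (p : Fin m → Ω → ℝ) (hmeas : ∀ k, Measurable (p k))
    (hppos : ∀ α k, 0 ≤ p k α) (hpsum : ∀ α, ∑ k, p k α = 1)
    (c : Fin m → ℝ) (hcpos : ∀ k, 0 ≤ c k) (hcsum : ∑ k, c k = 1)
    (hconc : ∀ k, ∀ δ > 0, μ {α | δ ≤ |p k α - c k|} ≤ ENNReal.ofReal (β / δ ^ 2)) :
    ENNReal.ofReal (1 - m * Real.sqrt β)
      ≤ μ {α | ∀ (M : ℕ) (Φ : (Fin N → Fin m) → (Fin M → ℝ)) (g : (Fin M → ℝ) → Bool),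
            (1/2) * ∑ s ∈ univ.filter
                (fun s : Fin N → Fin m => g (Φ s) = false), ∏ j, p (s j) α
              + (1/2) * ∑ s ∈ univ.filter
                (fun s : Fin N → Fin m => g (Φ s) = true), ∏ j, c (s j)
              ≤ 1/2 + (N * m * β ^ ((1:ℝ)/4)) / 4} := by
  set ε : ℝ := β ^ ((1:ℝ)/4) with hε
  have hεpos : 0 < ε := Real.rpow_pos_of_pos hβ _
  have hεsq : β / ε ^ 2 = Real.sqrt β := by
    have h2 : ε ^ 2 = Real.sqrt β := by
      rw [hε, ← Real.rpow_natCast (β ^ ((1:ℝ)/4)) 2, ← Real.rpow_mul hβ.le,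
        Real.sqrt_eq_rpow]
      norm_num
    rw [h2, Real.div_sqrt]
  -- the good set
  set G : Set Ω := {α | ∀ k, |p k α - c k| < ε} with hG
  -- bound on the complement
  have hGc : μ Gᶜ ≤ ENNReal.ofReal (m * Real.sqrt β) := by
    have hsub : Gᶜ ⊆ ⋃ k : Fin m, {α | ε ≤ |p k α - c k|} := by
      intro α hα
      simp only [hG, Set.mem_compl_iff, Set.mem_setOf_eq, not_forall, not_lt] at hα
      obtain ⟨k, hk⟩ := hα
      exact Set.mem_iUnion.2 ⟨k, hk⟩
    calc μ Gᶜ ≤ ∑ k : Fin m, μ {α | ε ≤ |p k α - c k|} :=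
          (measure_mono hsub).trans (measure_iUnion_fintype_le _ _)
      _ ≤ ∑ _k : Fin m, ENNReal.ofReal (Real.sqrt β) := by
          refine Finset.sum_le_sum fun k _ => ?_
          have := hconc k ε hεpos
          rwa [hεsq] at this
      _ = ENNReal.ofReal (m * Real.sqrt β) := by
          rw [Finset.sum_const, Finset.card_univ, Fintype.card_fin, nsmul_eq_mul,
            ENNReal.ofReal_mul (by positivity)]
          simp
  have hGlb : ENNReal.ofReal (1 - m * Real.sqrt β) ≤ μ G := by
    rw [ENNReal.ofReal_sub _ (by positivity)]
    rw [tsub_le_iff_right]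
    calc ENNReal.ofReal 1 = μ Set.univ := by simp
      _ = μ (G ∪ Gᶜ) := by rw [Set.union_compl_self]
      _ ≤ μ G + μ Gᶜ := measure_union_le _ _
      _ ≤ μ G + ENNReal.ofReal (m * Real.sqrt β) := by gcongr
  refine hGlb.trans (measure_mono ?_)
  -- inclusion of good set into the target set
  intro α hα
  intro M Φ g
  have hPsum : ∑ s : Fin N → Fin m, ∏ j, p (s j) α = 1 := aux_sum_prod _ (hpsum α)
  have hCsum : ∑ s : Fin N → Fin m, ∏ j, c (s j) = 1 := aux_sum_prod _ hcsum
  have hδ : ∑ k, |p k α - c k| ≤ m * ε := by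
    calc ∑ k, |p k α - c k| ≤ ∑ _k : Fin m, ε :=
          Finset.sum_le_sum fun k _ => (hα k).le
      _ = m * ε := by rw [Finset.sum_const, Finset.card_univ, Fintype.card_fin, nsmul_eq_mul]
  have hL1 : ∑ s : Fin N → Fin m, |(∏ j, p (s j) α) - ∏ j, c (s j)| ≤ N * (m * ε) := by
    refine (aux_l1 _ _ (fun k => hppos α k) hcpos (hpsum α) hcsum N).trans ?_
    have hN' : (0:ℝ) ≤ N := Nat.cast_nonneg N
    nlinarith
  set A : Finset (Fin N → Fin m) := univ.filter (fun s => g (Φ s) = true) with hA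
  have hfilter : univ.filter (fun s : Fin N → Fin m => g (Φ s) = false) = Aᶜ := by
    ext s
    simp [hA]
  have key : ∑ s ∈ A, ((∏ j, c (s j)) - ∏ j, p (s j) α) ≤ (N * (m * ε)) / 2 := by
    refine (aux_pos _ ?_ A).trans ?_
    · rw [Finset.sum_sub_distrib, hCsum, hPsum]; ring
    · have habs : ∑ s : Fin N → Fin m, |(∏ j, c (s j)) - ∏ j, p (s j) α|
          = ∑ s : Fin N → Fin m, |(∏ j, p (s j) α) - ∏ j, c (s j)| := by
        simp [abs_sub_comm]
      rw [habs]
      linarith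
  have hsplit : ∑ s ∈ univ.filter (fun s : Fin N → Fin m => g (Φ s) = false),
      ∏ j, p (s j) α = 1 - ∑ s ∈ A, ∏ j, p (s j) α := by
    have h := Finset.sum_compl_add_sum A (fun s => ∏ j, p (s j) α)
    rw [hfilter]
    linarith [hPsum, h]
  have hkey2 : (∑ s ∈ A, ∏ j, c (s j)) - ∑ s ∈ A, ∏ j, p (s j) α ≤ (N * (m * ε)) / 2 := by
    rw [← Finset.sum_sub_distrib]
    exact key
  show (1/2) * ∑ s ∈ univ.filter (fun s : Fin N → Fin m => g (Φ s) = false), ∏ j, p (s j) α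
      + (1/2) * ∑ s ∈ A, ∏ j, c (s j) ≤ 1/2 + (N * m * ε) / 4
  rw [hsplit]
  nlinarith [hkey2]
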